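/- arXiv:0809.2018 — 2 statements merged into one kernel-verified Lean document; each statement's English description precedes it below -/
import Mathlib

section
/- (Ricci equations.) Under the setup of a submanifold with potential of normals, the equality of mixed third partial derivatives of n implies, for all indices i,j,l,k and all u ∈ U: ∂d^k_{ij}/∂u^l − ∂d^k_{il}/∂u^j + Σ_s ( d^s_{ij} d^k_{sl} − d^s_{il} d^k_{sj} ) + Σ_s ( c^s_{ij} b^k_{sl} − c^s_{il} b^k_{sj} ) = 0, together with the dual Codazzi equations ∂c^k_{ij}/∂u^l − ∂c^k_{il}/∂u^j + Σ_s ( d^s_{ij} c^k_{sl} − d^s_{il} c^k_{sj} ) + Σ_s ( c^s_{ij} a^k_{sl} − c^s_{il} a^k_{sj} ) = 0. -/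
/-- Partial derivative in the `i`-th coordinate direction. -/
noncomputable def pd {N : ℕ} {E : Type*} [NormedAddCommGroup E] [NormedSpace ℝ E]
    (i : Fin N) (f : (Fin N → ℝ) → E) (u : Fin N → ℝ) : E :=
  fderiv ℝ f u (Pi.single i 1)

/-- The pseudo-Euclidean scalar product `B(x,y) = xᵀ G y` on `ℝ^m`. -/
def Bform {m : ℕ} (G : Matrix (Fin m) (Fin m) ℝ) (x y : Fin m → ℝ) : ℝ :=
  ∑ i, ∑ j, x i * G i j * y j

section helpers

variable {N : ℕ} {E : Type*} [NormedAddCommGroup E] [NormedSpace ℝ E]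

lemma contDiffAt_pd (i : Fin N) {f : (Fin N → ℝ) → E} {u} (hf : ContDiffAt ℝ (⊤ : ℕ∞) f u) :
    ContDiffAt ℝ (⊤ : ℕ∞) (pd i f) u := by
  have h := hf.fderiv_right (m := (⊤ : ℕ∞)) (by simp)
  exact h.clm_apply contDiffAt_const

lemma pd_comm {f : (Fin N → ℝ) → E} {u} (hf : ContDiffAt ℝ (⊤ : ℕ∞) f u) (i j : Fin N) :
    pd i (pd j f) u = pd j (pd i f) u := by
  have hs := hf.isSymmSndFDerivAt (by rw [minSmoothness_of_isRCLikeNormedField]; exact WithTop.coe_le_coe.mpr (le_top : (2 : ℕ∞) ≤ ⊤))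
  have hd : DifferentiableAt ℝ (fderiv ℝ f) u := by
    have := hf.fderiv_right (m := (⊤ : ℕ∞)) (by simp)
    exact this.differentiableAt (by simp)
  have key : ∀ m k : Fin N,
      pd m (pd k f) u = fderiv ℝ (fderiv ℝ f) u (Pi.single m 1) (Pi.single k 1) := by
    intro m k
    unfold pd
    rw [fderiv_clm_apply hd (differentiableAt_const _)]
    simp
  rw [key, key, hs]

lemma pd_congr {U : Set (Fin N → ℝ)} (hU : IsOpen U) {u} (hu : u ∈ U)
    {f g : (Fin N → ℝ) → E} (h : ∀ v ∈ U, f v = g v) (m : Fin N) :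
    pd m f u = pd m g u := by
  unfold pd
  rw [Filter.EventuallyEq.fderiv_eq ?_]
  filter_upwards [hU.mem_nhds hu] with v hv using h v hv

lemma pd_add {f g : (Fin N → ℝ) → E} {u} (hf : DifferentiableAt ℝ f u)
    (hg : DifferentiableAt ℝ g u) (m : Fin N) :
    pd m (fun v => f v + g v) u = pd m f u + pd m g u := by
  unfold pd; rw [fderiv_fun_add hf hg]; simp

lemma pd_smul {φ : (Fin N → ℝ) → ℝ} {g : (Fin N → ℝ) → E} {u}
    (hφ : DifferentiableAt ℝ φ u) (hg : DifferentiableAt ℝ g u) (m : Fin N) :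
    pd m (fun v => φ v • g v) u = φ u • pd m g u + pd m φ u • g u := by
  unfold pd; rw [fderiv_fun_smul hφ hg]; simp

lemma pd_sum {ι : Type*} (s : Finset ι) {F : ι → (Fin N → ℝ) → E} {u}
    (hF : ∀ k ∈ s, DifferentiableAt ℝ (F k) u) (m : Fin N) :
    pd m (fun v => ∑ k ∈ s, F k v) u = ∑ k ∈ s, pd m (F k) u := by
  unfold pd; rw [fderiv_fun_sum hF]; simp

lemma regroup (C : Fin N → ℝ) (A : Fin N → Fin N → ℝ) (V : Fin N → E) :
    ∑ k, C k • (∑ s, A k s • V s) = ∑ k, (∑ s, C s * A s k) • V k := by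
  simp only [Finset.smul_sum, smul_smul, Finset.sum_smul]
  exact Finset.sum_comm

end helpers

/-- `X^k_{ij}` is written `X i j k`.  Ricci equations and dual Codazzi equations. -/
theorem stmt11
    (N : ℕ) (hN : 1 ≤ N)
    (G : Matrix (Fin (2 * N)) (Fin (2 * N)) ℝ)
    (hGsymm : G.transpose = G) (hGdet : G.det ≠ 0)
    (U : Set (Fin N → ℝ)) (hU : IsOpen U)
    (r n : (Fin N → ℝ) → (Fin (2 * N) → ℝ))
    (hr : ContDiffOn ℝ (⊤ : ℕ∞) r U) (hn : ContDiffOn ℝ (⊤ : ℕ∞) n U)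
    (hbasis : ∀ u ∈ U,
      LinearIndependent ℝ (Sum.elim (fun i : Fin N => pd i r u) (fun j : Fin N => pd j n u)) ∧
      Submodule.span ℝ
        (Set.range (Sum.elim (fun i : Fin N => pd i r u) (fun j : Fin N => pd j n u))) = ⊤)
    (horth : ∀ u ∈ U, ∀ i j : Fin N, Bform G (pd i r u) (pd j n u) = 0)
    (a b c d : Fin N → Fin N → Fin N → (Fin N → ℝ) → ℝ)
    (hsmooth : ∀ i j k : Fin N,
      ContDiffOn ℝ (⊤ : ℕ∞) (a i j k) U ∧ ContDiffOn ℝ (⊤ : ℕ∞) (b i j k) U ∧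
      ContDiffOn ℝ (⊤ : ℕ∞) (c i j k) U ∧ ContDiffOn ℝ (⊤ : ℕ∞) (d i j k) U)
    (hGauss : ∀ u ∈ U, ∀ i j : Fin N,
      pd i (pd j r) u =
        (∑ k, a i j k u • pd k r u) + ∑ k, b i j k u • pd k n u)
    (hWeingarten : ∀ u ∈ U, ∀ i j : Fin N,
      pd i (pd j n) u =
        (∑ k, c i j k u • pd k r u) + ∑ k, d i j k u • pd k n u) :
    ∀ u ∈ U, ∀ i j l k : Fin N,
      (pd l (d i j k) u - pd j (d i l k) u
        + (∑ s, (d i j s u * d s l k u - d i l s u * d s j k u))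
        + (∑ s, (c i j s u * b s l k u - c i l s u * b s j k u)) = 0) ∧
      (pd l (c i j k) u - pd j (c i l k) u
        + (∑ s, (d i j s u * c s l k u - d i l s u * c s j k u))
        + (∑ s, (c i j s u * a s l k u - c i l s u * a s j k u)) = 0) := by
  -- basic smoothness facts
  have hrAt : ∀ v ∈ U, ContDiffAt ℝ (⊤ : ℕ∞) r v := fun v hv => hr.contDiffAt (hU.mem_nhds hv)
  have hnAt : ∀ v ∈ U, ContDiffAt ℝ (⊤ : ℕ∞) n v := fun v hv => hn.contDiffAt (hU.mem_nhds hv)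
  have hdc : ∀ v ∈ U, ∀ p q k : Fin N, DifferentiableAt ℝ (c p q k) v := fun v hv p q k =>
    (((hsmooth p q k).2.2.1).contDiffAt (hU.mem_nhds hv)).differentiableAt (by simp)
  have hdd : ∀ v ∈ U, ∀ p q k : Fin N, DifferentiableAt ℝ (d p q k) v := fun v hv p q k =>
    (((hsmooth p q k).2.2.2).contDiffAt (hU.mem_nhds hv)).differentiableAt (by simp)
  have hdpr : ∀ v ∈ U, ∀ k : Fin N, DifferentiableAt ℝ (pd k r) v := fun v hv k =>
    (contDiffAt_pd k (hrAt v hv)).differentiableAt (by simp)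
  have hdpn : ∀ v ∈ U, ∀ k : Fin N, DifferentiableAt ℝ (pd k n) v := fun v hv k =>
    (contDiffAt_pd k (hnAt v hv)).differentiableAt (by simp)
  -- extracting coefficients from a vanishing linear combination
  have coeffzero : ∀ v ∈ U, ∀ P Q : Fin N → ℝ,
      ((∑ k, P k • pd k r v) + ∑ k, Q k • pd k n v = 0) → ∀ k, P k = 0 ∧ Q k = 0 := by
    intro v hv P Q h k
    have hli := (hbasis v hv).1
    rw [Fintype.linearIndependent_iff] at hli
    have hz : ∑ x : Fin N ⊕ Fin N, Sum.elim P Q x •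
        Sum.elim (fun i : Fin N => pd i r v) (fun j : Fin N => pd j n v) x = 0 := by
      rw [Fintype.sum_sum_type]
      simpa using h
    exact ⟨hli (Sum.elim P Q) hz (Sum.inl k), hli (Sum.elim P Q) hz (Sum.inr k)⟩
  -- symmetry of the coefficients in the two lower indices
  have symab : ∀ v ∈ U, ∀ p q k : Fin N, a p q k v = a q p k v ∧ b p q k v = b q p k v := by
    intro v hv p q k
    have h := coeffzero v hv (fun k => a p q k v - a q p k v) (fun k => b p q k v - b q p k v)
      ?_ k
    · exact ⟨sub_eq_zero.mp h.1, sub_eq_zero.mp h.2⟩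
    · simp only [sub_smul, Finset.sum_sub_distrib]
      rw [sub_add_sub_comm, ← hGauss v hv p q, ← hGauss v hv q p, pd_comm (hrAt v hv) p q,
        sub_self]
  have symcd : ∀ v ∈ U, ∀ p q k : Fin N, c p q k v = c q p k v ∧ d p q k v = d q p k v := by
    intro v hv p q k
    have h := coeffzero v hv (fun k => c p q k v - c q p k v) (fun k => d p q k v - d q p k v)
      ?_ k
    · exact ⟨sub_eq_zero.mp h.1, sub_eq_zero.mp h.2⟩
    · simp only [sub_smul, Finset.sum_sub_distrib]
      rw [sub_add_sub_comm, ← hWeingarten v hv p q, ← hWeingarten v hv q p,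
        pd_comm (hnAt v hv) p q, sub_self]
  -- key expansion of third derivatives of n
  have key : ∀ u ∈ U, ∀ m i j : Fin N,
      pd m (pd i (pd j n)) u =
        (∑ k, (pd m (c i j k) u + (∑ s, c i j s u * a m s k u)
            + ∑ s, d i j s u * c m s k u) • pd k r u)
        + ∑ k, (pd m (d i j k) u + (∑ s, c i j s u * b m s k u)
            + ∑ s, d i j s u * d m s k u) • pd k n u := by
    intro u hu m i j
    have step1 : pd m (pd i (pd j n)) u
        = pd m (fun v => (∑ k, c i j k v • pd k r v) + ∑ k, d i j k v • pd k n v) u :=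
      pd_congr hU hu (fun v hv => hWeingarten v hv i j) m
    have d1 : DifferentiableAt ℝ (fun v => ∑ k, c i j k v • pd k r v) u :=
      DifferentiableAt.fun_sum fun k _ => (hdc u hu i j k).smul (hdpr u hu k)
    have d2 : DifferentiableAt ℝ (fun v => ∑ k, d i j k v • pd k n v) u :=
      DifferentiableAt.fun_sum fun k _ => (hdd u hu i j k).smul (hdpn u hu k)
    rw [step1, pd_add d1 d2 m,
      pd_sum Finset.univ (F := fun k v => c i j k v • pd k r v) (fun k _ => (hdc u hu i j k).smul (hdpr u hu k)) m,
      pd_sum Finset.univ (F := fun k v => d i j k v • pd k n v) (fun k _ => (hdd u hu i j k).smul (hdpn u hu k)) m]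
    have e1 : ∀ k : Fin N, pd m (fun v => c i j k v • pd k r v) u
        = c i j k u • pd m (pd k r) u + pd m (c i j k) u • pd k r u := fun k =>
      pd_smul (hdc u hu i j k) (hdpr u hu k) m
    have e2 : ∀ k : Fin N, pd m (fun v => d i j k v • pd k n v) u
        = d i j k u • pd m (pd k n) u + pd m (d i j k) u • pd k n u := fun k =>
      pd_smul (hdd u hu i j k) (hdpn u hu k) m
    simp only [e1, e2, hGauss u hu, hWeingarten u hu]
    simp only [smul_add, Finset.sum_add_distrib, regroup, add_smul]
    abel
  -- third derivative symmetry
  intro u hu i j l k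
  have E3 : pd l (pd i (pd j n)) u = pd j (pd i (pd l n)) u := by
    have s1 : pd l (pd i (pd j n)) u = pd l (pd j (pd i n)) u :=
      pd_congr hU hu (fun v hv => pd_comm (hnAt v hv) i j) l
    have s2 : pd l (pd j (pd i n)) u = pd j (pd l (pd i n)) u :=
      pd_comm (contDiffAt_pd i (hnAt u hu)) l j
    have s3 : pd j (pd l (pd i n)) u = pd j (pd i (pd l n)) u :=
      pd_congr hU hu (fun v hv => pd_comm (hnAt v hv) l i) j
    rw [s1, s2, s3]
  have Ediff := E3
  rw [key u hu l i j, key u hu j i l] at Ediff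
  have h0 := coeffzero u hu
    (fun k => (pd l (c i j k) u + (∑ s, c i j s u * a l s k u) + ∑ s, d i j s u * c l s k u)
      - (pd j (c i l k) u + (∑ s, c i l s u * a j s k u) + ∑ s, d i l s u * c j s k u))
    (fun k => (pd l (d i j k) u + (∑ s, c i j s u * b l s k u) + ∑ s, d i j s u * d l s k u)
      - (pd j (d i l k) u + (∑ s, c i l s u * b j s k u) + ∑ s, d i l s u * d j s k u))
    (by simp only [sub_smul, Finset.sum_sub_distrib]
        rw [sub_add_sub_comm, Ediff, sub_self]) k
  obtain ⟨hC, hD⟩ := h0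
  have sa : ∀ p q s : Fin N, a p q s u = a q p s u := fun p q s => (symab u hu p q s).1
  have sb : ∀ p q s : Fin N, b p q s u = b q p s u := fun p q s => (symab u hu p q s).2
  have sc : ∀ p q s : Fin N, c p q s u = c q p s u := fun p q s => (symcd u hu p q s).1
  have sd : ∀ p q s : Fin N, d p q s u = d q p s u := fun p q s => (symcd u hu p q s).2
  constructor
  · -- Ricci
    have hD' : pd l (d i j k) u + (∑ s, c i j s u * b s l k u) + (∑ s, d i j s u * d s l k u)
        - (pd j (d i l k) u + (∑ s, c i l s u * b s j k u) + ∑ s, d i l s u * d s j k u) = 0 := by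
      simpa only [show ∀ s : Fin N, b l s k u = b s l k u from fun s => sb l s k,
        show ∀ s : Fin N, b j s k u = b s j k u from fun s => sb j s k,
        show ∀ s : Fin N, d l s k u = d s l k u from fun s => sd l s k,
        show ∀ s : Fin N, d j s k u = d s j k u from fun s => sd j s k] using hD
    have e1 : ∑ s : Fin N, (d i j s u * d s l k u - d i l s u * d s j k u)
        = (∑ s, d i j s u * d s l k u) - ∑ s, d i l s u * d s j k u := by
      rw [Finset.sum_sub_distrib]
    have e2 : ∑ s : Fin N, (c i j s u * b s l k u - c i l s u * b s j k u)
        = (∑ s, c i j s u * b s l k u) - ∑ s, c i l s u * b s j k u := by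
      rw [Finset.sum_sub_distrib]
    rw [e1, e2]; linarith [hD']
  · -- dual Codazzi
    have hC' : pd l (c i j k) u + (∑ s, c i j s u * a s l k u) + (∑ s, d i j s u * c s l k u)
        - (pd j (c i l k) u + (∑ s, c i l s u * a s j k u) + ∑ s, d i l s u * c s j k u) = 0 := by
      simpa only [show ∀ s : Fin N, a l s k u = a s l k u from fun s => sa l s k,
        show ∀ s : Fin N, a j s k u = a s j k u from fun s => sa j s k,
        show ∀ s : Fin N, c l s k u = c s l k u from fun s => sc l s k,
        show ∀ s : Fin N, c j s k u = c s j k u from fun s => sc j s k] using hC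
    have e1 : ∑ s : Fin N, (d i j s u * c s l k u - d i l s u * c s j k u)
        = (∑ s, d i j s u * c s l k u) - ∑ s, d i l s u * c s j k u := by
      rw [Finset.sum_sub_distrib]
    have e2 : ∑ s : Fin N, (c i j s u * a s l k u - c i l s u * a s j k u)
        = (∑ s, c i j s u * a s l k u) - ∑ s, c i l s u * a s j k u := by
      rw [Finset.sum_sub_distrib]
    rw [e1, e2]; linarith [hC']
end

section
/- (Flat systems of Gauss–Weingarten type force the associativity constraint.) Let N ≥ 1, let U ⊆ ℝ^N be open and connected, let c₀ ≠ 0 be a real constant, and let b^k_{ij} : U → ℝ be smooth functions symmetric in i,j. Suppose r, n : U → ℝ^{2N} are smooth maps such that for every u ∈ U the vectors ∂r/∂u^1(u),…,∂r/∂u^N(u), ∂n/∂u^1(u),…,∂n/∂u^N(u) form a basis of ℝ^{2N}, and the linear system ∂²r/∂u^i∂u^j = Σ_k b^k_{ij} ∂n/∂u^k, ∂²n/∂u^i∂u^j = −(1/c₀) Σ_k b^k_{ij} ∂r/∂u^k holds on U. Then the compatibility of the system (equality of mixed third partial derivatives) forces ∂b^k_{ij}/∂u^l = ∂b^k_{il}/∂u^j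 and Σ_s b^s_{ij} b^k_{sl} = Σ_s b^s_{il} b^k_{sj} for all indices i,j,k,l and all u ∈ U. -/
section aux

variable {N : ℕ} {E : Type*} [NormedAddCommGroup E] [NormedSpace ℝ E]
variable {U : Set (Fin N → ℝ)}

lemma pd_contDiffOn (hU : IsOpen U) {f : (Fin N → ℝ) → E} (hf : ContDiffOn ℝ (⊤ : ℕ∞) f U)
    (i : Fin N) : ContDiffOn ℝ (⊤ : ℕ∞) (pd i f) U := by
  have h1 : ContDiffOn ℝ (⊤ : ℕ∞) (fderiv ℝ f) U := hf.fderiv_of_isOpen hU (by simp)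
  exact (ContinuousLinearMap.apply ℝ E (Pi.single i 1 : Fin N → ℝ)).contDiff.comp_contDiffOn h1

lemma diffAt_of_contDiffOn (hU : IsOpen U) {f : (Fin N → ℝ) → E} (hf : ContDiffOn ℝ (⊤ : ℕ∞) f U)
    {u : Fin N → ℝ} (hu : u ∈ U) : DifferentiableAt ℝ f u :=
  (hf.contDiffAt (hU.mem_nhds hu)).differentiableAt (by simp)

lemma pd_congr_nhds {f g : (Fin N → ℝ) → E} {u : Fin N → ℝ}
    (h : f =ᶠ[nhds u] g) (i : Fin N) : pd i f u = pd i g u := by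
  unfold pd; rw [h.fderiv_eq]

lemma pd_comm_s19 (hU : IsOpen U) {f : (Fin N → ℝ) → E} (hf : ContDiffOn ℝ (⊤ : ℕ∞) f U)
    {u : Fin N → ℝ} (hu : u ∈ U) (a c : Fin N) :
    pd a (pd c f) u = pd c (pd a f) u := by
  have hf' : ContDiffOn ℝ (⊤ : ℕ∞) (fderiv ℝ f) U := hf.fderiv_of_isOpen hU (by simp)
  have hder : ∀ᶠ y in nhds u, HasFDerivAt f (fderiv ℝ f y) y := by
    filter_upwards [hU.mem_nhds hu] with y hy
    exact (diffAt_of_contDiffOn hU hf hy).hasFDerivAt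
  have h2 : HasFDerivAt (fderiv ℝ f) (fderiv ℝ (fderiv ℝ f) u) u :=
    (diffAt_of_contDiffOn hU hf' hu).hasFDerivAt
  have hpd : ∀ v w : Fin N → ℝ,
      fderiv ℝ (fun y => fderiv ℝ f y v) u w = fderiv ℝ (fderiv ℝ f) u w v := by
    intro v w
    have : HasFDerivAt (fun y => fderiv ℝ f y v)
        ((ContinuousLinearMap.apply ℝ E v).comp (fderiv ℝ (fderiv ℝ f) u)) u :=
      (ContinuousLinearMap.apply ℝ E v).hasFDerivAt.comp u h2
    rw [this.fderiv]; rfl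
  have hsymm := second_derivative_symmetric_of_eventually hder h2
    (Pi.single a 1) (Pi.single c 1)
  show fderiv ℝ (fun y => fderiv ℝ f y (Pi.single c 1)) u (Pi.single a 1)
      = fderiv ℝ (fun y => fderiv ℝ f y (Pi.single a 1)) u (Pi.single c 1)
  rw [hpd, hpd]
  exact hsymm

lemma pd_sum_smul {c : Fin N → (Fin N → ℝ) → ℝ} {v : Fin N → (Fin N → ℝ) → E}
    {u : Fin N → ℝ} (hc : ∀ k, DifferentiableAt ℝ (c k) u)
    (hv : ∀ k, DifferentiableAt ℝ (v k) u) (l : Fin N) :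
    pd l (fun y => ∑ k, c k y • v k y) u
      = ∑ k, (pd l (c k) u • v k u + c k u • pd l (v k) u) := by
  have h : ∀ k ∈ Finset.univ, HasFDerivAt (fun y => c k y • v k y)
      ((c k u) • fderiv ℝ (v k) u + (fderiv ℝ (c k) u).smulRight (v k u)) u :=
    fun k _ => (hc k).hasFDerivAt.smul (hv k).hasFDerivAt
  have hsum := HasFDerivAt.fun_sum h
  show fderiv ℝ (fun y => ∑ k, c k y • v k y) u (Pi.single l 1) = _
  rw [hsum.fderiv]
  simp only [ContinuousLinearMap.coe_sum', Finset.sum_apply, ContinuousLinearMap.add_apply,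
    ContinuousLinearMap.coe_smul', Pi.smul_apply, ContinuousLinearMap.smulRight_apply]
  exact Finset.sum_congr rfl fun k _ => by rw [add_comm]; rfl

end aux

/-- `b^k_{ij}` is written `b i j k`. -/
theorem stmt19
    (N : ℕ) (hN : 1 ≤ N)
    (U : Set (Fin N → ℝ)) (hUopen : IsOpen U) (hUconn : IsConnected U)
    (c₀ : ℝ) (hc₀ : c₀ ≠ 0)
    (b : Fin N → Fin N → Fin N → (Fin N → ℝ) → ℝ)
    (hbsmooth : ∀ i j k : Fin N, ContDiffOn ℝ (⊤ : ℕ∞) (b i j k) U)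
    (hbsymm : ∀ i j k : Fin N, ∀ u ∈ U, b i j k u = b j i k u)
    (r n : (Fin N → ℝ) → (Fin (2 * N) → ℝ))
    (hr : ContDiffOn ℝ (⊤ : ℕ∞) r U) (hn : ContDiffOn ℝ (⊤ : ℕ∞) n U)
    (hbasis : ∀ u ∈ U,
      LinearIndependent ℝ (Sum.elim (fun i : Fin N => pd i r u) (fun j : Fin N => pd j n u)) ∧
      Submodule.span ℝ
        (Set.range (Sum.elim (fun i : Fin N => pd i r u) (fun j : Fin N => pd j n u))) = ⊤)
    (hsys_r : ∀ u ∈ U, ∀ i j : Fin N,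
      pd i (pd j r) u = ∑ k, b i j k u • pd k n u)
    (hsys_n : ∀ u ∈ U, ∀ i j : Fin N,
      pd i (pd j n) u = -(1 / c₀) • ∑ k, b i j k u • pd k r u) :
    ∀ u ∈ U, ∀ i j k l : Fin N,
      pd l (b i j k) u = pd j (b i l k) u ∧
      ∑ s, b i j s u * b s l k u = ∑ s, b i l s u * b s j k u := by
  intro u hu i j k l
  -- smoothness of first partials
  have hpdr : ∀ a : Fin N, ContDiffOn ℝ (⊤ : ℕ∞) (pd a r) U := pd_contDiffOn hUopen hr
  have hpdn : ∀ a : Fin N, ContDiffOn ℝ (⊤ : ℕ∞) (pd a n) U := pd_contDiffOn hUopen hn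
  -- differentiability at points of U
  have hdpdn : ∀ a : Fin N, ∀ y ∈ U, DifferentiableAt ℝ (pd a n) y :=
    fun a y hy => diffAt_of_contDiffOn hUopen (hpdn a) hy
  have hdb : ∀ i' j' k' : Fin N, ∀ y ∈ U, DifferentiableAt ℝ (b i' j' k') y :=
    fun i' j' k' y hy => diffAt_of_contDiffOn hUopen (hbsmooth i' j' k') hy
  -- Expansion of pd l' (pd i (pd j' r)) u for arbitrary j' l'
  have expand : ∀ j' l' : Fin N,
      pd l' (pd i (pd j' r)) u
        = ∑ t, pd l' (b i j' t) u • pd t n u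
          + ∑ s, (-(1 / c₀) * ∑ t, b i j' t u * b l' t s u) • pd s r u := by
    intro j' l'
    have hev : pd i (pd j' r) =ᶠ[nhds u] fun y => ∑ t, b i j' t y • pd t n y := by
      filter_upwards [hUopen.mem_nhds hu] with y hy
      exact hsys_r y hy i j'
    rw [pd_congr_nhds hev l',
      pd_sum_smul (fun t => hdb i j' t u hu) (fun t => hdpdn t u hu) l']
    rw [Finset.sum_add_distrib]
    congr 1
    have : ∀ t : Fin N, b i j' t u • pd l' (pd t n) u
        = b i j' t u • (-(1 / c₀) • ∑ s, b l' t s u • pd s r u) := by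
      intro t; rw [hsys_n u hu l' t]
    rw [Finset.sum_congr rfl fun t _ => this t]
    simp only [Finset.smul_sum, smul_smul]
    rw [Finset.sum_comm]
    refine Finset.sum_congr rfl fun s _ => ?_
    rw [Finset.mul_sum, Finset.sum_smul]
    exact Finset.sum_congr rfl fun t _ => by congr 1; ring
  -- symmetry of third derivatives
  have hcomm3 : pd l (pd i (pd j r)) u = pd j (pd i (pd l r)) u := by
    have h1 : pd l (pd i (pd j r)) u = pd i (pd l (pd j r)) u :=
      pd_comm_s19 hUopen (pd_contDiffOn hUopen hr j) hu l i
    have h2 : pd i (pd l (pd j r)) u = pd i (pd j (pd l r)) u := by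
      refine pd_congr_nhds ?_ i
      filter_upwards [hUopen.mem_nhds hu] with y hy
      exact pd_comm_s19 hUopen hr hy l j
    have h3 : pd i (pd j (pd l r)) u = pd j (pd i (pd l r)) u :=
      pd_comm_s19 hUopen (pd_contDiffOn hUopen hr l) hu i j
    rw [h1, h2, h3]
  have key := (expand j l).symm.trans (hcomm3.trans (expand l j))
  -- coefficients
  set P : Fin N → (Fin (2 * N) → ℝ) := fun s => pd s r u with hP
  set Q : Fin N → (Fin (2 * N) → ℝ) := fun t => pd t n u with hQ
  set g : Fin N ⊕ Fin N → ℝ := Sum.elim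
      (fun s => (-(1 / c₀) * ∑ t, b i j t u * b l t s u)
              - (-(1 / c₀) * ∑ t, b i l t u * b j t s u))
      (fun t => pd l (b i j t) u - pd j (b i l t) u) with hg
  have hzero : ∀ t, g t = 0 := by
    refine Fintype.linearIndependent_iff.mp (hbasis u hu).1 g ?_
    rw [Fintype.sum_sum_type]
    simp only [hg, Sum.elim_inl, Sum.elim_inr, sub_smul]
    rw [Finset.sum_sub_distrib, Finset.sum_sub_distrib]
    linear_combination (norm := abel) key
  constructor
  · have := hzero (Sum.inr k)
    simpa [hg, sub_eq_zero] using this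
  · have h0 := hzero (Sum.inl k)
    simp only [hg, Sum.elim_inl, sub_eq_zero] at h0
    have hne : (-(1 / c₀) : ℝ) ≠ 0 := by
      simp [hc₀]
    have h1 : (∑ t, b i j t u * b l t k u) = ∑ t, b i l t u * b j t k u :=
      mul_left_cancel₀ hne h0
    calc ∑ s, b i j s u * b s l k u = ∑ s, b i j s u * b l s k u := by
          exact Finset.sum_congr rfl fun s _ => by rw [hbsymm l s k u hu]
      _ = ∑ s, b i l s u * b j s k u := h1
      _ = ∑ s, b i l s u * b s j k u := by
          exact Finset.sum_congr rfl fun s _ => by rw [hbsymm j s k u hu]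
end
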